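/- arXiv:2103.02310 — 4 statements merged into one kernel-verified Lean document; each statement's English description precedes it below -/
import Mathlib

section
/- Under the hypotheses of the previous lemma, if (W_n) is an increasing sequence of compact subsets of ℝ^d with ∪ₙ Wₙ = ℝ^d and there exists an increasing sequence rₙ → ∞ with |(∂Wₙ ⊕ rₙ) ∩ Wₙ| = o(|Wₙ|), then (1/|Wₙ|) ∫_{Wₙ^k} f(x) dx converges, as n → ∞, to ∫_{ℝ^{d(k-1)}} f(0,x₂,…,x_k) dx₂⋯dx_k. -/
open MeasureTheory Metric Set Filter
open scoped ENNReal Topology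

/-!
Substituting `x = (c, c + z₁, …, c + z_k)`, translation invariance turns `f x` into
`g z := f (0, z)`, so the integral over `Wᵏ⁺¹` becomes the integral over `c ∈ W` of the
integral of `g` over those `z` with `c + zᵢ ∈ W` for all `i`. If `c` is farther than `ρ` from
`∂W`, only points with `‖z‖ ≥ ρ` are missing, which costs at most `∫_{‖z‖ ≥ ρ} |g|`; the
remaining `c` lie in the boundary layer and cost at most `∫ |g|` each. After dividing by `|W|`,
the first error vanishes by dominated convergence as `ρ → ∞` and the second by the boundary
condition.
-/

theorem Metric.ball_infDist_frontier_subset {E : Type*} [NormedAddCommGroup E]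
    [NormedSpace ℝ E] {W : Set E} {c : E} (hc : c ∈ W) :
    ball c (infDist c (frontier W)) ⊆ W := by
  set R := infDist c (frontier W)
  rcases le_or_gt R 0 with hR | hR
  · rw [(ball_eq_empty (x := c)).2 hR]
    exact empty_subset W
  have hfrontier : ∀ y ∈ ball c R, y ∉ frontier W := fun y hy =>
    notMem_of_dist_lt_infDist (by rwa [dist_comm, ← mem_ball])
  have hcR : c ∈ ball c R := mem_ball_self hR
  refine Subset.trans ?_ interior_subset
  refine (convex_ball c R).isPreconnected.subset_of_closure_inter_subset isOpen_interior
    ⟨c, hcR, by_contra fun h => hfrontier c hcR ⟨subset_closure hc, h⟩⟩ ?_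
  rintro y ⟨hy, hyR⟩
  by_contra h
  exact hfrontier y hyR ⟨closure_mono interior_subset hy, h⟩

theorem setIntegral_le_add_of_subset_union {α : Type*} [MeasurableSpace α] {μ : Measure α}
    {f : α → ℝ} {s t u : Set α} (hf : 0 ≤ f) (hs : IntegrableOn f s μ) (ht : IntegrableOn f t μ)
    (hu : u ⊆ s ∪ t) :
    ∫ x in u, f x ∂μ ≤ ∫ x in s, f x ∂μ + ∫ x in t, f x ∂μ := by
  rw [← integral_add_measure hs ht]
  exact integral_mono_measure
    ((Measure.restrict_mono hu le_rfl).trans (Measure.restrict_union_le s t))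
    (Eventually.of_forall hf) (Integrable.add_measure hs ht)

section ProdSnd

variable {α β F : Type*} [MeasurableSpace α] [MeasurableSpace β] [NormedAddCommGroup F]
  {μ : Measure α} {ν : Measure β} [SFinite μ] [SFinite ν]

theorem setIntegral_prod_snd [NormedSpace ℝ F] (g : β → F) (s : Set α) (t : Set β) :
    ∫ p in s ×ˢ t, g p.2 ∂μ.prod ν = μ.real s • ∫ y in t, g y ∂ν := by
  rw [← Measure.prod_restrict, integral_fun_snd, measureReal_restrict_apply_univ]

theorem MeasureTheory.Integrable.integrableOn_prod_snd {g : β → F} (hg : Integrable g ν)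
    {s : Set α} (hs : μ s ≠ ∞) (t : Set β) :
    IntegrableOn (fun p => g p.2) (s ×ˢ t) (μ.prod ν) := by
  have : IsFiniteMeasure (μ.restrict s) := isFiniteMeasure_restrict.2 hs
  rw [IntegrableOn, ← Measure.prod_restrict]
  exact hg.integrableOn.comp_snd _

end ProdSnd

theorem tendsto_setIntegral_compl_ball_zero {X F ι : Type*} [NormedAddCommGroup X]
    [MeasurableSpace X] [OpensMeasurableSpace X] [NormedAddCommGroup F] [NormedSpace ℝ F]
    {μ : Measure X} {g : X → F} (hg : Integrable g μ) {l : Filter ι} [l.IsCountablyGenerated]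
    {r : ι → ℝ} (hr : Tendsto r l atTop) :
    Tendsto (fun n => ∫ z in (ball 0 (r n))ᶜ, g z ∂μ) l (𝓝 0) := by
  simp_rw [← integral_indicator measurableSet_ball.compl]
  have := tendsto_integral_filter_of_dominated_convergence (μ := μ) (l := l)
    (F := fun n => (ball 0 (r n))ᶜ.indicator g) (f := 0) (fun z => ‖g z‖)
    (Eventually.of_forall fun n => hg.1.indicator measurableSet_ball.compl)
    (Eventually.of_forall fun n => Eventually.of_forall fun z => norm_indicator_le_norm_self _ _)
    hg.norm (Eventually.of_forall fun z => tendsto_const_nhds.congr' ?_)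
  · simpa using this
  filter_upwards [hr.eventually_gt_atTop ‖z‖] with n hn
  simp [hn]

namespace MeasurableEquiv

variable {E ι : Type*} [AddGroup E] [MeasurableSpace E] [MeasurableAdd₂ E] [MeasurableNeg E]

def prodAddConst : E × (ι → E) ≃ᵐ E × (ι → E) where
  toFun p := (p.1, p.2 + Function.const ι p.1)
  invFun p := (p.1, p.2 - Function.const ι p.1)
  left_inv p := by simp
  right_inv p := by simp
  measurable_toFun := by dsimp only [Equiv.coe_fn_mk]; fun_prop
  measurable_invFun := by dsimp only [Equiv.coe_fn_symm_mk]; fun_prop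

@[simp]
theorem prodAddConst_apply (p : E × (ι → E)) :
    prodAddConst p = (p.1, p.2 + Function.const ι p.1) := rfl

theorem measurePreserving_prodAddConst [Fintype ι] (μ : Measure E) [SigmaFinite μ]
    [μ.IsAddRightInvariant] :
    MeasurePreserving (prodAddConst (ι := ι))
      (μ.prod (Measure.pi fun _ => μ)) (μ.prod (Measure.pi fun _ => μ)) :=
  (MeasurePreserving.id μ).skew_product (g := fun c z => z + Function.const ι c) (by fun_prop)
    (Eventually.of_forall fun c => map_add_right_eq_self _ _)

def finConsAddConst (k : ℕ) : E × (Fin k → E) ≃ᵐ (Fin (k + 1) → E) :=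
  prodAddConst.trans (piFinSuccAbove (fun _ => E) 0).symm

theorem finConsAddConst_apply {k : ℕ} (p : E × (Fin k → E)) :
    finConsAddConst k p = fun i => (Fin.cons 0 p.2 : Fin (k + 1) → E) i + p.1 := by
  funext i
  cases i using Fin.cases <;> simp [finConsAddConst]

theorem measurePreserving_finConsAddConst (k : ℕ) (μ : Measure E) [SigmaFinite μ]
    [μ.IsAddRightInvariant] :
    MeasurePreserving (finConsAddConst k) (μ.prod (Measure.pi fun _ => μ))
      (Measure.pi fun _ => μ) :=
  (measurePreserving_piFinSuccAbove (fun _ => μ) 0).symm.comp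
    (measurePreserving_prodAddConst μ)

end MeasurableEquiv

open MeasurableEquiv in
theorem setIntegral_univ_pi_eq_setIntegral_prod {E F : Type*} [AddGroup E] [MeasurableSpace E]
    [MeasurableAdd₂ E] [MeasurableNeg E] [NormedAddCommGroup F] [NormedSpace ℝ F] {k : ℕ}
    (μ : Measure E) [SigmaFinite μ] [μ.IsAddRightInvariant] {f : (Fin (k + 1) → E) → F}
    (hf : ∀ (t : E) (x : Fin (k + 1) → E), f (fun i => x i + t) = f x) (W : Set E) :
    ∫ x in univ.pi (fun _ => W), f x ∂(Measure.pi fun _ => μ) =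
      ∫ p in {p : E × (Fin k → E) | p.1 ∈ W ∧ ∀ j, p.2 j + p.1 ∈ W}, f (Fin.cons 0 p.2)
        ∂(μ.prod (Measure.pi fun _ => μ)) := by
  rw [← (measurePreserving_finConsAddConst k μ).setIntegral_preimage_emb
    (finConsAddConst k).measurableEmbedding]
  have hpre : finConsAddConst k ⁻¹' univ.pi (fun _ => W) =
      {p : E × (Fin k → E) | p.1 ∈ W ∧ ∀ j, p.2 j + p.1 ∈ W} := by
    ext p
    simp [finConsAddConst_apply, Fin.forall_fin_succ]
  simp only [hpre, finConsAddConst_apply, hf]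

section Window

variable {E ι : Type*} [NormedAddCommGroup E] [NormedSpace ℝ E] [MeasurableSpace E]
  [BorelSpace E] [SecondCountableTopology E] [Fintype ι]
  {μ : Measure E} {ν : Measure (ι → E)} [SFinite μ] [SFinite ν]
  {g : (ι → E) → ℝ} {W : Set E}

theorem abs_setIntegral_sub_measureReal_mul_integral_le (hg : Integrable g ν)
    (hWm : MeasurableSet W) (hW : μ W ≠ ∞) (ρ : ℝ) :
    |∫ p in {p : E × (ι → E) | p.1 ∈ W ∧ ∀ i, p.2 i + p.1 ∈ W}, g p.2 ∂μ.prod ν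
        - μ.real W * ∫ z, g z ∂ν|
      ≤ μ.real W * ∫ z in (ball 0 ρ)ᶜ, |g z| ∂ν
        + μ.real ({x | infDist x (frontier W) ≤ ρ} ∩ W) * ∫ z, |g z| ∂ν := by
  set A := {p : E × (ι → E) | p.1 ∈ W ∧ ∀ i, p.2 i + p.1 ∈ W}
  set B := {x | infDist x (frontier W) ≤ ρ} ∩ W
  have hAm : MeasurableSet A := by
    simp only [A, ofPred_and, ofPred_forall]
    exact (hWm.preimage measurable_fst).inter (.iInter fun i => hWm.preimage (by fun_prop))
  have hB : μ B ≠ ∞ := ((measure_mono inter_subset_right).trans_lt hW.lt_top).ne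
  have hAW : A ⊆ W ×ˢ univ := fun p hp => ⟨hp.1, trivial⟩
  have hcover : (W ×ˢ univ) \ A ⊆ B ×ˢ univ ∪ W ×ˢ (ball 0 ρ)ᶜ := by
    rintro ⟨c, z⟩ ⟨⟨hc, -⟩, hcz⟩
    by_cases hcB : c ∈ B
    · exact Or.inl ⟨hcB, trivial⟩
    refine Or.inr ⟨hc, fun hz => hcz ⟨hc, fun i => ?_⟩⟩
    have hρ : ρ < infDist c (frontier W) := lt_of_not_ge fun h => hcB ⟨h, hc⟩
    apply ball_infDist_frontier_subset hc (ball_subset_ball hρ.le _)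
    rw [mem_ball, dist_eq_norm, add_sub_cancel_right]
    exact (norm_le_pi_norm z i).trans_lt (mem_ball_zero_iff.1 hz)
  calc |∫ p in A, g p.2 ∂μ.prod ν - μ.real W * ∫ z, g z ∂ν|
      = |∫ p in (W ×ˢ univ) \ A, g p.2 ∂μ.prod ν| := by
        rw [setIntegral_sdiff hAm (hg.integrableOn_prod_snd hW univ) hAW, setIntegral_prod_snd,
          setIntegral_univ, smul_eq_mul, abs_sub_comm]
    _ ≤ ∫ p in (W ×ˢ univ) \ A, |g p.2| ∂μ.prod ν := abs_integral_le_integral_abs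
    _ ≤ ∫ p in B ×ˢ univ, |g p.2| ∂μ.prod ν + ∫ p in W ×ˢ (ball 0 ρ)ᶜ, |g p.2| ∂μ.prod ν :=
        setIntegral_le_add_of_subset_union (fun _ => abs_nonneg _)
          (hg.abs.integrableOn_prod_snd hB _) (hg.abs.integrableOn_prod_snd hW _) hcover
    _ = _ := by
        rw [setIntegral_prod_snd (fun z => |g z|), setIntegral_prod_snd (fun z => |g z|),
          setIntegral_univ, smul_eq_mul, smul_eq_mul, add_comm]

theorem abs_one_div_mul_setIntegral_sub_integral_le (hg : Integrable g ν) (hWm : MeasurableSet W)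
    (hW : 0 < μ.real W) (ρ : ℝ) :
    |1 / μ.real W * ∫ p in {p : E × (ι → E) | p.1 ∈ W ∧ ∀ i, p.2 i + p.1 ∈ W}, g p.2 ∂μ.prod ν
        - ∫ z, g z ∂ν|
      ≤ ∫ z in (ball 0 ρ)ᶜ, |g z| ∂ν
        + μ.real ({x | infDist x (frontier W) ≤ ρ} ∩ W) / μ.real W * ∫ z, |g z| ∂ν := by
  have hWfin : μ W ≠ ∞ := fun h => by simp [measureReal_def, h] at hW
  have key := abs_setIntegral_sub_measureReal_mul_integral_le hg hWm hWfin ρ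
  rw [show ∀ X I : ℝ, 1 / μ.real W * X - I = (X - μ.real W * I) / μ.real W by
      intros; field_simp, abs_div, abs_of_pos hW, div_le_iff₀ hW]
  refine key.trans_eq ?_
  field_simp

end Window

theorem translation_invariant_window_average_tendsto_general {d k : ℕ}
    (f : (Fin (k + 1) → EuclideanSpace ℝ (Fin d)) → ℝ)
    (hinv : ∀ (t : EuclideanSpace ℝ (Fin d)) (x : Fin (k + 1) → EuclideanSpace ℝ (Fin d)),
      f (fun i => x i + t) = f x)
    (hint : Integrable (fun y : Fin k → EuclideanSpace ℝ (Fin d) => f (Fin.cons 0 y)))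
    (W : ℕ → Set (EuclideanSpace ℝ (Fin d))) (hWc : ∀ n, IsCompact (W n))
    (hWpos : ∀ n, 0 < (volume (W n)).toReal)
    (r : ℕ → ℝ) (hrlim : Tendsto r atTop atTop)
    (hborder : Tendsto
      (fun n => (volume ({x | infDist x (frontier (W n)) ≤ r n} ∩ W n)).toReal /
        (volume (W n)).toReal) atTop (nhds 0)) :
    Tendsto
      (fun n => (1 / (volume (W n)).toReal) *
        ∫ x in Set.univ.pi (fun _ : Fin (k + 1) => W n), f x)
      atTop
      (nhds (∫ y : Fin k → EuclideanSpace ℝ (Fin d), f (Fin.cons 0 y))) := by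
  set g : (Fin k → EuclideanSpace ℝ (Fin d)) → ℝ := fun y => f (Fin.cons 0 y)
  set B := fun n => {x | infDist x (frontier (W n)) ≤ r n} ∩ W n
  have hbound : ∀ n, ‖1 / (volume (W n)).toReal *
        (∫ x in Set.univ.pi (fun _ : Fin (k + 1) => W n), f x) - ∫ y, g y‖
      ≤ (∫ z in (ball 0 (r n))ᶜ, |g z|)
        + (volume (B n)).toReal / (volume (W n)).toReal * ∫ z, |g z| := fun n => by
    rw [Real.norm_eq_abs, volume_pi (α := fun _ : Fin (k + 1) => EuclideanSpace ℝ (Fin d)),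
      setIntegral_univ_pi_eq_setIntegral_prod volume hinv]
    exact abs_one_div_mul_setIntegral_sub_integral_le hint (hWc n).measurableSet (hWpos n) (r n)
  rw [tendsto_iff_norm_sub_tendsto_zero]
  refine squeeze_zero (fun n => norm_nonneg _) hbound ?_
  simpa using (tendsto_setIntegral_compl_ball_zero hint.abs hrlim).add (hborder.mul_const _)

theorem translation_invariant_window_average_tendsto {d k : ℕ}
    (f : (Fin (k + 1) → EuclideanSpace ℝ (Fin d)) → ℝ)
    (hinv : ∀ (t : EuclideanSpace ℝ (Fin d)) (x : Fin (k + 1) → EuclideanSpace ℝ (Fin d)),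
      f (fun i => x i + t) = f x)
    (hint : Integrable (fun y : Fin k → EuclideanSpace ℝ (Fin d) => f (Fin.cons 0 y)))
    (W : ℕ → Set (EuclideanSpace ℝ (Fin d))) (hWc : ∀ n, IsCompact (W n))
    (hWmono : Monotone W) (hWunion : (⋃ n, W n) = Set.univ)
    (hWpos : ∀ n, 0 < (volume (W n)).toReal)
    (r : ℕ → ℝ) (hrmono : Monotone r) (hrlim : Tendsto r atTop atTop)
    (hborder : Tendsto
      (fun n => (volume ({x | infDist x (frontier (W n)) ≤ r n} ∩ W n)).toReal /
        (volume (W n)).toReal) atTop (nhds 0)) :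
    Tendsto
      (fun n => (1 / (volume (W n)).toReal) *
        ∫ x in Set.univ.pi (fun _ : Fin (k + 1) => W n), f x)
      atTop
      (nhds (∫ y : Fin k → EuclideanSpace ℝ (Fin d), f (Fin.cons 0 y))) :=
  translation_invariant_window_average_tendsto_general f hinv hint W hWc hWpos r hrlim hborder
end

section
/- Block-operator identity for the L kernel: Let K be a bounded self-adjoint operator on a Hilbert space H = H_W ⊕ H_{W^c} with 0 ≤ K and ‖K‖ < 1, let P_W, P_{W^c} denote the orthogonal projections onto the two summands, set K_W = P_W K P_W (viewed on H_W), L_{[W]} = K_W(I_W − K_W)^{-1}, and L = K(I − K)^{-1}. Then P_W L P_W − L_{[W]} = P_W L P_{W^c} (P_{W^c} L P_{W^c} + I_{W^c})^{-1} P_{W^c} L P_W. -/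
open ContinuousLinearMap

theorem schur_complement_L_kernel_identity
    {H : Type*} [NormedAddCommGroup H] [InnerProductSpace ℂ H] [CompleteSpace H]
    (P K L LW R : H →L[ℂ] H)
    (hPidem : P * P = P) (hPsa : IsSelfAdjoint P)
    (hKpos : K.IsPositive) (hKnorm : ‖K‖ < 1)
    -- L = K (I - K)⁻¹
    (hL1 : (1 + L) * (1 - K) = 1) (hL2 : (1 - K) * (1 + L) = 1)
    -- LW = K_W (I_W - K_W)⁻¹ as an operator supported on H_W = range P
    (hLWsupp : LW = P * LW * P)
    (hLWinv1 : (P + LW) * (P - P * K * P) = P)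
    (hLWinv2 : (P - P * K * P) * (P + LW) = P)
    -- R = (P_{Wᶜ} L P_{Wᶜ} + I_{Wᶜ})⁻¹ as an operator supported on H_{Wᶜ} = range (1 - P)
    (hRsupp : R = (1 - P) * R * (1 - P))
    (hRinv1 : R * ((1 - P) * L * (1 - P) + (1 - P)) = 1 - P)
    (hRinv2 : ((1 - P) * L * (1 - P) + (1 - P)) * R = 1 - P) :
    P * L * P - LW = P * L * (1 - P) * R * (1 - P) * L * P := by
  have z1 : P * P - P = 0 := by rw [hPidem]; exact sub_self P
  have zQ : (1 - P) * (1 - P) - (1 - P) = 0 := by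
    have h : (1 - P) * (1 - P) - (1 - P) = P * P - P := by noncomm_ring
    rw [h, z1]
  have zw : (1 - K) * (1 + L) - 1 = 0 := sub_eq_zero_of_eq hL2
  set X := P * L * P - P * L * (1 - P) * R * (1 - P) * L * P with hX
  -- step e2
  have e2 : (P - P * K * P) * (P * L * (1 - P))
      = P * K * (1 - P) * ((1 - P) * L * (1 - P) + (1 - P)) := by
    have h : (P - P * K * P) * (P * L * (1 - P))
        = P * K * (1 - P) * ((1 - P) * L * (1 - P) + (1 - P))
          + P * ((1 - K) * (1 + L) - 1) * (1 - P)
          + (P * P - P) * L * (1 - P)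
          - P * K * (P * P - P) * L * (1 - P)
          - P * K * ((1 - P) * (1 - P) - (1 - P)) * L * (1 - P)
          - P * K * ((1 - P) * (1 - P) - (1 - P)) := by noncomm_ring
    rw [h, z1, zQ, zw]; noncomm_ring
  -- step eB
  have eB : (P - P * K * P) * (P * L * (1 - P) * R * (1 - P) * L * P)
      = P * K * (1 - P) * L * P := by
    have h1 : (P - P * K * P) * (P * L * (1 - P) * R * (1 - P) * L * P)
        = ((P - P * K * P) * (P * L * (1 - P))) * (R * ((1 - P) * L * P)) := by
      noncomm_ring
    rw [h1, e2]
    have h2 : P * K * (1 - P) * ((1 - P) * L * (1 - P) + (1 - P)) * (R * ((1 - P) * L * P))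
        = P * K * (1 - P) * ((((1 - P) * L * (1 - P) + (1 - P)) * R) * ((1 - P) * L * P)) := by
      noncomm_ring
    rw [h2, hRinv2]
    have h3 : P * K * (1 - P) * ((1 - P) * ((1 - P) * L * P))
        = P * K * (1 - P) * L * P
          + P * K * ((1 - P) * (1 - P) - (1 - P)) * L * P
          + P * K * ((1 - P) * (1 - P) - (1 - P)) * ((1 - P) * L * P) := by
      noncomm_ring
    rw [h3, zQ]; noncomm_ring
  -- step eA
  have eA : (P - P * K * P) * (P + P * L * P) = P + P * K * (1 - P) * L * P := by
    have h : (P - P * K * P) * (P + P * L * P)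
        = P + P * K * (1 - P) * L * P
          + P * ((1 - K) * (1 + L) - 1) * P
          + (P * P - P)
          + (P * P - P) * L * P
          - P * K * (P * P - P)
          - P * K * (P * P - P) * L * P := by noncomm_ring
    rw [h, z1, zw]; noncomm_ring
  -- key identity
  have key : (P - P * K * P) * (P + X) = P := by
    have h : (P - P * K * P) * (P + X)
        = (P - P * K * P) * (P + P * L * P)
          - (P - P * K * P) * (P * L * (1 - P) * R * (1 - P) * L * P) := by
      rw [hX]; noncomm_ring
    rw [h, eA, eB]; noncomm_ring
  -- support facts
  have hLW1 : LW * P = LW := by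
    conv_lhs => rw [hLWsupp]
    conv_rhs => rw [hLWsupp]
    have h : P * LW * P * P = P * LW * P + P * LW * (P * P - P) := by noncomm_ring
    rw [h, z1]; noncomm_ring
  have hPXmul : P * X = X := by
    have h : P * X = X + (P * P - P) * L * P
        - (P * P - P) * L * (1 - P) * R * (1 - P) * L * P := by
      rw [hX]; noncomm_ring
    rw [h, z1]; noncomm_ring
  have hLWP : (P + LW) * P = P + LW := by
    have h : (P + LW) * P = P * P + LW * P := by noncomm_ring
    rw [h, hPidem, hLW1]
  have hPX : P * (P + X) = P + X := by
    have h : P * (P + X) = P * P + P * X := by noncomm_ring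
    rw [h, hPidem, hPXmul]
  have final : P + LW = P + X := by
    calc P + LW = (P + LW) * P := hLWP.symm
      _ = (P + LW) * ((P - P * K * P) * (P + X)) := by rw [key]
      _ = ((P + LW) * (P - P * K * P)) * (P + X) := by noncomm_ring
      _ = P * (P + X) := by rw [hLWinv1]
      _ = P + X := hPX
  have hLWX : LW = X := by
    have := add_left_cancel final
    exact this
  rw [hLWX, hX]; noncomm_ring
end

section
/- With the notation of the block-operator identity, 0 ≤ P_W L P_W − L_{[W]} ≤ P_W L P_{W^c} L P_W in the Loewner order; i.e., the difference P_W L P_W − L_{[W]} is a positive operator bounded above by the operator N_W = P_W L P_{W^c} L P_W. -/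
/-!
With `q = 1 - p`, the Schur complement formula for the compression of `(1 - k)⁻¹ = 1 + l` to the
corner `p` gives `p l p - l_W = (q l p)⋆ (1 + q l q)⁻¹ (q l p)`. Since `0 ≤ k ≤ 1`,
`1 + l = (1 - k)⁻¹ ≥ 1`, so `l ≥ 0` and `1 + q l q ≥ 1`; its inverse therefore lies between `0`
and `1`, and conjugating by `q l p` gives both bounds, the upper one being
`(q l p)⋆ (q l p) = p l q l p`.
-/

open ContinuousLinearMap

section SchurComplement

variable {R : Type*} [Ring R]

theorem corner_mul_corner_inverse {p m a t : R} (hp : IsIdempotentElem p) (hma : m * a = 1)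
    (ht : t * (p + (1 - p) * m * (1 - p)) = 1) :
    (p * m * p - p * m * (1 - p) * t * ((1 - p) * m * p)) * (p * a * p) = p := by
  have hsum : p + (1 - p) = 1 := add_sub_cancel p 1
  have hpq : p * (1 - p) = 0 := hp.mul_one_sub_self
  have hqp : (1 - p) * p = 0 := hp.one_sub_mul_self
  have hqq : (1 - p) * (1 - p) = 1 - p := hp.one_sub.eq
  generalize 1 - p = q at *
  have hmpa (x y : R) : x * m * p * a * y = x * y - x * m * q * a * y := by
    rw [eq_sub_iff_add_eq]
    calc x * m * p * a * y + x * m * q * a * y = x * (m * (p + q) * a) * y := by noncomm_ring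
      _ = x * y := by rw [hsum, mul_one, hma, mul_one]
  -- `t` is only a left inverse of `p + q m q`, but that already makes it invert `q m q` on `q`.
  have htq : t * (q * m * q) = q := by
    calc t * (q * m * q) = t * (p + q * m * q) * q := by
          rw [mul_assoc t, add_mul, hpq, zero_add, mul_assoc _ q q, hqq]
      _ = q := by rw [ht, one_mul]
  calc (p * m * p - p * m * q * t * (q * m * p)) * (p * a * p)
      = p * m * p * a * p - p * m * q * t * (q * m * p * a * p) := by
        simp only [sub_mul, mul_assoc, hp.mul_self_mul]
    _ = p * m * p * a * p + p * m * q * (t * (q * m * q)) * a * p := by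
        rw [hmpa q p, hqp]; noncomm_ring
    _ = p := by rw [htq, hmpa p p, hp.eq, mul_assoc (p * m) q q, hqq]; noncomm_ring

theorem corner_sub_eq_of_corner_inverse {p k l lw t : R} (hp : IsIdempotentElem p)
    (hkl : (1 + l) * (1 - k) = 1) (ht : t * (1 + (1 - p) * l * (1 - p)) = 1)
    (hlw : p * lw = lw) (hlwk : (p - p * k * p) * (p + lw) = p) :
    p * l * p - lw = p * l * (1 - p) * t * ((1 - p) * l * p) := by
  have key := corner_mul_corner_inverse hp hkl (t := t)
  have hsum : p + (1 - p) = 1 := add_sub_cancel p 1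
  have hpq : p * (1 - p) = 0 := hp.mul_one_sub_self
  have hqp : (1 - p) * p = 0 := hp.one_sub_mul_self
  have hqq : (1 - p) * (1 - p) = 1 - p := hp.one_sub.eq
  generalize 1 - p = q at *
  have hqmq : p + q * (1 + l) * q = 1 + q * l * q := by
    rw [mul_one_add, add_mul, hqq, ← add_assoc, hsum]
  have hpmq : p * (1 + l) * q = p * l * q := by rw [mul_one_add, add_mul, hpq, zero_add]
  have hqmp : q * (1 + l) * p = q * l * p := by rw [mul_one_add, add_mul, hqp, zero_add]
  have hpmp : p * (1 + l) * p = p + p * l * p := by rw [mul_one_add, add_mul, hp.eq]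
  have hpap : p * (1 - k) * p = p - p * k * p := by rw [mul_sub, mul_one, sub_mul, hp.eq]
  rw [hqmq, hpmq, hqmp, hpmp, hpap, add_sub_assoc] at key
  specialize key ht
  set X := p * l * p - p * l * q * t * (q * l * p)
  have hX : X * p = X := by simp only [X, sub_mul, mul_assoc, hp.eq]
  have hlwX : p + lw = p + X :=
    calc p + lw = p * (p + lw) := by rw [mul_add, hp.eq, hlw]
      _ = (p + X) * (p - p * k * p) * (p + lw) := by rw [key]
      _ = p + X := by rw [mul_assoc, hlwk, add_mul, hp.eq, hX]
  rw [add_left_cancel hlwX]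
  exact sub_sub_cancel _ _

end SchurComplement

section CStarAlgebra

variable {A : Type*} [CStarAlgebra A] [PartialOrder A] [StarOrderedRing A]

theorem nonneg_of_one_add_inverse_one_sub {k l : A} (hk : 0 ≤ k) (hk1 : k ≤ 1)
    (h1 : (1 + l) * (1 - k) = 1) (h2 : (1 - k) * (1 + l) = 1) : 0 ≤ l := by
  let u : Aˣ := ⟨1 - k, 1 + l, h2, h1⟩
  have : (1 : A) ≤ ↑u⁻¹ :=
    (CStarAlgebra.one_le_inv_iff_le_one (a := u) (sub_nonneg.2 hk1)).2 (sub_le_self 1 hk)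
  exact (le_add_iff_nonneg_right 1).1 this

theorem exists_inverse_one_add_mem_Icc {b : A} (hb : 0 ≤ b) :
    ∃ t ∈ Set.Icc (0 : A) 1, t * (1 + b) = 1 := by
  have h1 : (1 : A) ≤ 1 + b := le_add_of_nonneg_right hb
  lift 1 + b to Aˣ using CStarAlgebra.isUnit_of_le 1 h1 with u
  exact ⟨↑u⁻¹, ⟨CFC.inv_nonneg_of_nonneg u (zero_le_one.trans h1), CStarAlgebra.inv_le_one h1⟩,
    u.inv_mul⟩

theorem corner_sub_corner_inverse_mem_Icc {p k l lw : A} (hp : IsIdempotentElem p)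
    (hp' : IsSelfAdjoint p) (hk : 0 ≤ k) (hk1 : k ≤ 1)
    (h1 : (1 + l) * (1 - k) = 1) (h2 : (1 - k) * (1 + l) = 1)
    (hlw : p * lw = lw) (hlwk : (p - p * k * p) * (p + lw) = p) :
    p * l * p - lw ∈ Set.Icc 0 (p * l * (1 - p) * l * p) := by
  have hl := nonneg_of_one_add_inverse_one_sub hk hk1 h1 h2
  have hq : IsSelfAdjoint (1 - p) := (IsSelfAdjoint.one A).sub hp'
  obtain ⟨t, ⟨ht0, ht1⟩, ht⟩ :=
    exists_inverse_one_add_mem_Icc (star_left_conjugate_nonneg hl (1 - p))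
  rw [hq.star_eq] at ht
  have hc : p * l * (1 - p) = star ((1 - p) * l * p) := by
    rw [star_mul, star_mul, hq.star_eq, hp'.star_eq, (IsSelfAdjoint.of_nonneg hl).star_eq,
      mul_assoc]
  have hcc : star ((1 - p) * l * p) * ((1 - p) * l * p) = p * l * (1 - p) * l * p := by
    rw [← hc]
    simp only [mul_assoc, hp.one_sub.mul_self_mul]
  rw [← hcc, corner_sub_eq_of_corner_inverse hp h1 ht hlw hlwk, hc]
  refine ⟨star_left_conjugate_nonneg ht0 _, ?_⟩
  simpa only [mul_one] using star_left_conjugate_le_conjugate ht1 ((1 - p) * l * p)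

end CStarAlgebra

theorem L_kernel_difference_loewner_bounds_general
    {H : Type*} [NormedAddCommGroup H] [InnerProductSpace ℂ H] [CompleteSpace H]
    (P K L LW : H →L[ℂ] H)
    (hPidem : P * P = P) (hPsa : IsSelfAdjoint P)
    (hKpos : K.IsPositive) (hKnorm : ‖K‖ < 1)
    -- L = K (I - K)⁻¹
    (hL1 : (1 + L) * (1 - K) = 1) (hL2 : (1 - K) * (1 + L) = 1)
    -- LW = K_W (I_W - K_W)⁻¹ as an operator supported on H_W = range P
    (hLWsupp : LW = P * LW * P)
    (hLWinv2 : (P - P * K * P) * (P + LW) = P) :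
    (P * L * P - LW).IsPositive ∧
      (P * L * (1 - P) * L * P - (P * L * P - LW)).IsPositive := by
  have hK : 0 ≤ K := (nonneg_iff_isPositive K).2 hKpos
  have hK1 : K ≤ 1 := (CStarAlgebra.norm_le_one_iff_of_nonneg K).1 hKnorm.le
  have hPLW : P * LW = LW := by rw [hLWsupp, ← mul_assoc, ← mul_assoc, hPidem]
  obtain ⟨hlow, hup⟩ :=
    corner_sub_corner_inverse_mem_Icc hPidem hPsa hK hK1 hL1 hL2 hPLW hLWinv2
  exact ⟨(nonneg_iff_isPositive _).1 hlow, (nonneg_iff_isPositive _).1 (sub_nonneg.2 hup)⟩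

theorem L_kernel_difference_loewner_bounds
    {H : Type*} [NormedAddCommGroup H] [InnerProductSpace ℂ H] [CompleteSpace H]
    (P K L LW : H →L[ℂ] H)
    (hPidem : P * P = P) (hPsa : IsSelfAdjoint P)
    (hKpos : K.IsPositive) (hKnorm : ‖K‖ < 1)
    -- L = K (I - K)⁻¹
    (hL1 : (1 + L) * (1 - K) = 1) (hL2 : (1 - K) * (1 + L) = 1)
    -- LW = K_W (I_W - K_W)⁻¹ as an operator supported on H_W = range P
    (hLWsupp : LW = P * LW * P)
    (hLWinv1 : (P + LW) * (P - P * K * P) = P)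
    (hLWinv2 : (P - P * K * P) * (P + LW) = P) :
    (P * L * P - LW).IsPositive ∧
      (P * L * (1 - P) * L * P - (P * L * P - LW)).IsPositive :=
  L_kernel_difference_loewner_bounds_general P K L LW hPidem hPsa hKpos hKnorm hL1 hL2 hLWsupp
    hLWinv2
end

section
/- Let K̂₀ : ℝ^d → [0,1) be measurable with 0 ≤ K̂₀(x) ≤ A/(1 + ‖x‖^{d+τ}) for constants A, τ > 0, and for ε > 0 define on ℓ²(ℤ^d) the Toeplitz-type quadratic form Q_ε(v) = Σ_{j,k∈ℤ^d} v_j v_k ε^d K₀(ε(k−j)), where K₀ is the inverse Fourier transform of K̂₀. Then for every unit vector v, Q_ε(v) ≤ Σ_{i∈ℤ^d} sup_{x∈C_i} K̂₀(x/ε), where C_i is the unit cube centered at i, and Σ_{i≠0} sup_{x∈C_i} K̂₀(x/ε) → 0 as ε → 0; consequently limsup_{ε→0} sup_{‖v‖=1} Q_ε(v) ≤ ‖K̂₀‖_∞. -/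
open MeasureTheory Filter Set

/-- Embedding of the lattice `ℤ^d` into `ℝ^d`. -/
noncomputable def intToEuc (d : ℕ) (z : Fin d → ℤ) : EuclideanSpace ℝ (Fin d) :=
  (EuclideanSpace.equiv (Fin d) ℝ).symm fun i => (z i : ℝ)

/-!
Write `φ(u) = ∑ⱼ vⱼ e^{2πi⟨j,u⟩}`. Substituting `t = u/ε` in the Fourier integral gives
`ε^d K₀(ε m) = ∫ K̂₀(u/ε) e^{2πi⟨m,u⟩} du`, so every finite square section of the quadratic form
equals `∫ K̂₀(u/ε) |φ(u)|² du`. Cut `ℝ^d` into the half-open unit cubes `Cᵢ` centred at the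
lattice points: on `Cᵢ`, `K̂₀(·/ε)` is at most its supremum `Sᵢ`, while `∫_{Cᵢ} |φ|² = ∑ⱼ vⱼ² ≤ 1`
because the characters `e^{2πi⟨m,u⟩}`, `m ∈ ℤ^d`, are orthonormal on any cube of side one.
Hence `Q_ε(v) ≤ ∑ᵢ Sᵢ`.

A point `x` of the cube around `i ≠ 0` has `1 + |iₖ| ≤ 4‖x‖` for every `k`, so the decay of `K̂₀`
gives `Sᵢ ≤ A (4ε)^{d+τ} ∏ₖ (1 + |iₖ|)^{-(d+τ)/d}`: a weight that is summable over `ℤ^d` (as a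
product of one-dimensional `p`-series with `p > 1`), times `ε^{d+τ} → 0`. Since `S₀ ≤ sup K̂₀`,
the limsup bound follows.
-/

open scoped FourierTransform ComplexConjugate Topology

lemma tsum_le_of_sum_product_le {α : Type*} {f : α × α → ℝ} {c : ℝ} (hc : 0 ≤ c)
    (h : ∀ F : Finset α, ∑ p ∈ F ×ˢ F, f p ≤ c) : ∑' p, f p ≤ c := by
  classical
  by_cases hf : Summable f
  · have hsq : Tendsto (fun F : Finset α => F ×ˢ F) atTop atTop :=
      tendsto_atTop_atTop.2 fun G => ⟨G.image Prod.fst ∪ G.image Prod.snd, fun F hF p hp =>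
        Finset.mem_product.2 ⟨hF (Finset.mem_union_left _ (Finset.mem_image_of_mem _ hp)),
          hF (Finset.mem_union_right _ (Finset.mem_image_of_mem _ hp))⟩⟩
    exact le_of_tendsto' (hf.hasSum.comp hsq) h
  · rwa [tsum_eq_zero_of_not_summable hf]

lemma summable_prod_apply {ι α : Type*} [Fintype ι] {b : α → ℝ} (hb : 0 ≤ b)
    (hbs : Summable b) : Summable fun x : ι → α => ∏ k, b (x k) := by
  classical
  refine summable_of_sum_le (c := ∏ _k : ι, ∑' a, b a)
    (fun x => Finset.prod_nonneg fun k _ => hb _) fun s => ?_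
  calc ∑ x ∈ s, ∏ k, b (x k)
      ≤ ∑ x ∈ Fintype.piFinset fun k => s.image (· k), ∏ k, b (x k) :=
        Finset.sum_le_sum_of_subset_of_nonneg
          (fun x hx => Fintype.mem_piFinset.2 fun k => Finset.mem_image_of_mem _ hx)
          fun x _ _ => Finset.prod_nonneg fun k _ => hb _
    _ = ∏ k, ∑ a ∈ s.image (· k), b a := (Finset.prod_univ_sum _ _).symm
    _ ≤ ∏ _k : ι, ∑' a, b a :=
        Finset.prod_le_prod (fun k _ => Finset.sum_nonneg fun a _ => hb a)
          fun k _ => hbs.sum_le_tsum _ fun a _ => hb a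

lemma summable_one_add_abs_int_rpow_neg {p : ℝ} (hp : 1 < p) :
    Summable fun n : ℤ => (1 + |(n : ℝ)|) ^ (-p) := by
  refine (Real.summable_abs_int_rpow hp).of_norm_bounded_eventually ?_
  filter_upwards [eventually_cofinite_ne 0] with n hn
  rw [Real.norm_of_nonneg (by positivity)]
  exact Real.rpow_le_rpow_of_nonpos (by simpa using hn) (by linarith) (by linarith)

lemma Summable.tsum_eq_add_tsum_ne {β : Type*} {f : β → ℝ} (hf : Summable f) (b : β) :
    ∑' x, f x = f b + ∑' x : {x // x ≠ b}, f x := by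
  classical
  rw [hf.tsum_eq_add_tsum_ite b, ← tsum_subtype_eq_of_support_subset (s := {x | x ≠ b})]
  · exact congrArg _ (tsum_congr fun x => if_neg x.2)
  · exact fun x hx h => hx (if_pos h)

lemma limsup_le_of_forall_pos_eventually_le {α : Type*} {l : Filter α} {f : α → ℝ} {M : ℝ}
    (hM : 0 ≤ M) (h : ∀ δ > 0, ∀ᶠ x in l, f x ≤ M + δ) : limsup f l ≤ M := by
  by_cases hf : l.IsCoboundedUnder (· ≤ ·) f
  · exact le_of_forall_pos_le_add fun δ hδ => limsup_le_of_le hf (h δ hδ)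
  -- otherwise the `limsup` is the junk value `0`
  · rwa [Real.limsup_of_not_isCoboundedUnder hf]

namespace DiscreteKernel

lemma fourierChar_sum {ι : Type*} (s : Finset ι) (x : ι → ℝ) :
    (𝐞 (∑ k ∈ s, x k) : ℂ) = ∏ k ∈ s, (𝐞 (x k) : ℂ) := by
  simp only [Real.fourierChar_apply, Complex.ofReal_mul, Complex.ofReal_sum, Finset.mul_sum,
    Finset.sum_mul, Complex.exp_sum]

lemma setIntegral_Ico_fourierChar_int_mul (m : ℤ) (a : ℝ) :
    ∫ t in Ico (a - 1/2) (a + 1/2), (𝐞 (m * t) : ℂ) = if m = 0 then 1 else 0 := by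
  split_ifs with hm
  · norm_num [hm, Real.volume_real_Ico]
  have hc : 2 * Real.pi * Complex.I * m ≠ 0 := by simp [Real.pi_ne_zero, hm]
  have hexp : ∀ t : ℝ, (𝐞 (m * t) : ℂ) = Complex.exp (2 * Real.pi * Complex.I * m * t) := by
    intro t; rw [Real.fourierChar_apply]; push_cast; ring_nf
  have hper : 2 * Real.pi * Complex.I * m * ↑(a + 1/2) =
      2 * Real.pi * Complex.I * m * ↑(a - 1/2) + m * (2 * Real.pi * Complex.I) := by
    push_cast; ring
  rw [integral_Ico_eq_integral_Ioc, ← intervalIntegral.integral_of_le (by linarith)]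
  simp_rw [hexp]
  rw [integral_exp_mul_complex hc, hper, Complex.exp_add, Complex.exp_int_mul_two_pi_mul_I,
    mul_one, sub_self, zero_div]

variable {d : ℕ}

noncomputable def latticeChar (m : Fin d → ℤ) (u : Fin d → ℝ) : ℂ := 𝐞 (∑ k, (m k : ℝ) * u k)

lemma norm_latticeChar (m : Fin d → ℤ) (u : Fin d → ℝ) : ‖latticeChar m u‖ = 1 :=
  Circle.norm_coe _

@[fun_prop]
lemma continuous_latticeChar (m : Fin d → ℤ) : Continuous (latticeChar m) :=
  continuous_subtype_val.comp (Real.continuous_fourierChar.comp (by fun_prop))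

lemma latticeChar_sub (m m' : Fin d → ℤ) (u : Fin d → ℝ) :
    latticeChar (m - m') u = conj (latticeChar m' u) * latticeChar m u := by
  simp only [latticeChar, Circle.starRingEnd_addChar, ← Circle.coe_mul, ← AddChar.map_add_eq_mul]
  congr 3
  simp only [Pi.sub_apply, Int.cast_sub, sub_mul, Finset.sum_sub_distrib]
  ring

/-- Half-open, so that the cubes centred at the points of `ℤ^d` partition `ℝ^d`. -/
def unitCube (c : Fin d → ℝ) : Set (Fin d → ℝ) := univ.pi fun k => Ico (c k - 1/2) (c k + 1/2)

lemma measurableSet_unitCube (c : Fin d → ℝ) : MeasurableSet (unitCube c) :=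
  .univ_pi fun _ => measurableSet_Ico

lemma unitCube_subset_Icc (c : Fin d → ℝ) :
    unitCube c ⊆ univ.pi fun k => Icc (c k - 1/2) (c k + 1/2) :=
  pi_mono fun _ _ => Ico_subset_Icc_self

lemma setIntegral_unitCube_latticeChar (m : Fin d → ℤ) (c : Fin d → ℝ) :
    ∫ u in unitCube c, latticeChar m u = if m = 0 then 1 else 0 := by
  simp only [unitCube, latticeChar, fourierChar_sum, volume_pi, Measure.restrict_pi_pi]
  rw [integral_fintype_prod_eq_prod (fun k t => (𝐞 (m k * t) : ℂ))]
  simp only [setIntegral_Ico_fourierChar_int_mul, Finset.prod_ite_zero, Finset.prod_const_one,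
    funext_iff, Pi.zero_apply, Finset.mem_univ, true_implies]

lemma mem_unitCube_intCast_iff (i : Fin d → ℤ) (u : Fin d → ℝ) :
    u ∈ unitCube (fun k => (i k : ℝ)) ↔ ∀ k, ⌊u k + 1/2⌋ = i k := by
  simp only [unitCube, mem_univ_pi, mem_Ico, Int.floor_eq_iff]
  refine forall_congr' fun k => ?_
  constructor <;> rintro ⟨h₁, h₂⟩ <;> constructor <;> linarith

lemma pairwise_disjoint_unitCube_intCast :
    Pairwise (Function.onFun Disjoint fun i : Fin d → ℤ => unitCube (fun k => (i k : ℝ))) := by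
  refine fun i j hij => Set.disjoint_left.2 fun u hi hj => hij (funext fun k => ?_)
  rw [← (mem_unitCube_intCast_iff i u).1 hi k, (mem_unitCube_intCast_iff j u).1 hj k]

lemma iUnion_unitCube_intCast : ⋃ i : Fin d → ℤ, unitCube (fun k => (i k : ℝ)) = univ :=
  eq_univ_of_forall fun u =>
    mem_iUnion.2 ⟨fun k => ⌊u k + 1/2⌋, (mem_unitCube_intCast_iff _ u).2 fun _ => rfl⟩

lemma integrableOn_unitCube_of_continuous {E : Type*} [NormedAddCommGroup E]
    {f : (Fin d → ℝ) → E} (hf : Continuous f) (c : Fin d → ℝ) : IntegrableOn f (unitCube c) :=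
  (hf.continuousOn.integrableOn_compact (isCompact_univ_pi fun _ => isCompact_Icc)).mono_set
    (unitCube_subset_Icc c)

noncomputable def trigPoly (F : Finset (Fin d → ℤ)) (v : (Fin d → ℤ) → ℝ) (u : Fin d → ℝ) : ℂ :=
  ∑ j ∈ F, (v j : ℂ) * latticeChar j u

variable (F : Finset (Fin d → ℤ)) (v : (Fin d → ℤ) → ℝ)

@[fun_prop]
lemma continuous_trigPoly : Continuous (trigPoly F v) := by
  unfold trigPoly; fun_prop

lemma norm_trigPoly_le (u : Fin d → ℝ) : ‖trigPoly F v u‖ ≤ ∑ j ∈ F, |v j| :=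
  (norm_sum_le _ _).trans_eq <| Finset.sum_congr rfl fun j _ => by simp [norm_latticeChar]

lemma ofReal_norm_sq_trigPoly (u : Fin d → ℝ) :
    ((‖trigPoly F v u‖ ^ 2 : ℝ) : ℂ) =
      ∑ p ∈ F ×ˢ F, (v p.1 * v p.2 : ℂ) * latticeChar (p.2 - p.1) u := by
  push_cast
  rw [← Complex.conj_mul', trigPoly, map_sum, Finset.sum_mul_sum, Finset.sum_product]
  simp only [latticeChar_sub, map_mul, Complex.conj_ofReal]
  exact Finset.sum_congr rfl fun _ _ => Finset.sum_congr rfl fun _ _ => by ring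

lemma setIntegral_unitCube_norm_sq_trigPoly (c : Fin d → ℝ) :
    ∫ u in unitCube c, ‖trigPoly F v u‖ ^ 2 = ∑ j ∈ F, v j ^ 2 := by
  apply Complex.ofReal_injective
  rw [← integral_complex_ofReal]
  simp_rw [ofReal_norm_sq_trigPoly]
  rw [integral_finsetSum _ fun p _ =>
    integrableOn_unitCube_of_continuous (by fun_prop) c]
  simp_rw [integral_const_mul, setIntegral_unitCube_latticeChar, sub_eq_zero, mul_ite, mul_one,
    mul_zero]
  rw [Finset.sum_product]
  push_cast
  exact Finset.sum_congr rfl fun j hj => by simp [hj, sq]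

variable {F v}

lemma _root_.MeasureTheory.Integrable.ofReal_mul_latticeChar {g : (Fin d → ℝ) → ℝ}
    (hg : Integrable g) (m : Fin d → ℤ) : Integrable fun u => (g u : ℂ) * latticeChar m u :=
  hg.ofReal.mul_bdd (continuous_latticeChar m).aestronglyMeasurable
    (ae_of_all _ fun u => (norm_latticeChar m u).le)

lemma integral_mul_norm_sq_trigPoly {g : (Fin d → ℝ) → ℝ} (hg : Integrable g)
    {κ : (Fin d → ℤ) → ℝ} (hκ : ∀ m, (κ m : ℂ) = ∫ u, g u * latticeChar m u) :
    ∫ u, g u * ‖trigPoly F v u‖ ^ 2 = ∑ p ∈ F ×ˢ F, v p.1 * v p.2 * κ (p.2 - p.1) := by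
  apply Complex.ofReal_injective
  rw [← integral_complex_ofReal]
  simp_rw [Complex.ofReal_mul, ofReal_norm_sq_trigPoly, Finset.mul_sum, Complex.ofReal_sum,
    Complex.ofReal_mul, hκ, ← integral_const_mul]
  rw [← integral_finsetSum _ fun p _ => (hg.ofReal_mul_latticeChar _).const_mul _]
  exact integral_congr_ae (ae_of_all _ fun _ => Finset.sum_congr rfl fun _ _ => by ring)

lemma integral_mul_norm_sq_trigPoly_le {g : (Fin d → ℝ) → ℝ} (hg : Integrable g)
    {S : (Fin d → ℤ) → ℝ} (hgS : ∀ i, ∀ u ∈ unitCube (fun k => (i k : ℝ)), g u ≤ S i)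
    (hS : 0 ≤ S) (hSs : Summable S) (hv : ∑ j ∈ F, v j ^ 2 ≤ 1) :
    ∫ u, g u * ‖trigPoly F v u‖ ^ 2 ≤ ∑' i, S i := by
  have hG : Integrable fun u => g u * ‖trigPoly F v u‖ ^ 2 :=
    hg.mul_bdd (c := (∑ j ∈ F, |v j|) ^ 2) (by fun_prop) (ae_of_all _ fun u => by
      simpa using pow_le_pow_left₀ (norm_nonneg _) (norm_trigPoly_le F v u) 2)
  have hcubes := hasSum_integral_iUnion (fun i => measurableSet_unitCube _)
    pairwise_disjoint_unitCube_intCast hG.integrableOn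
  rw [iUnion_unitCube_intCast, Measure.restrict_univ] at hcubes
  refine hcubes.tsum_eq ▸ hcubes.summable.tsum_le_tsum (fun i => ?_) hSs
  calc ∫ u in unitCube _, g u * ‖trigPoly F v u‖ ^ 2
      ≤ ∫ u in unitCube _, S i * ‖trigPoly F v u‖ ^ 2 :=
        setIntegral_mono_on hG.integrableOn
          (integrableOn_unitCube_of_continuous (by fun_prop) _) (measurableSet_unitCube _)
          fun u hu => mul_le_mul_of_nonneg_right (hgS i u hu) (sq_nonneg _)
    _ = S i * ∑ j ∈ F, v j ^ 2 := by
        rw [integral_const_mul, setIntegral_unitCube_norm_sq_trigPoly]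
    _ ≤ S i := mul_le_of_le_one_right (hS i) hv

lemma abs_sub_le_of_mem_unitCube {c u : Fin d → ℝ} (hu : u ∈ unitCube c) (k : Fin d) :
    |u k - c k| ≤ 1 / 2 := by
  obtain ⟨h₁, h₂⟩ := hu k (mem_univ k)
  rw [abs_le]; constructor <;> linarith

noncomputable def latticeWeight (p : ℝ) (i : Fin d → ℤ) : ℝ := ∏ k, (1 + |(i k : ℝ)|) ^ (-p)

lemma latticeWeight_nonneg (p : ℝ) (i : Fin d → ℤ) : 0 ≤ latticeWeight p i :=
  Finset.prod_nonneg fun _ _ => by positivity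

lemma summable_latticeWeight {s : ℝ} (hs : d < s) :
    Summable (latticeWeight (s / d) : (Fin d → ℤ) → ℝ) := by
  rcases d.eq_zero_or_pos with rfl | hd
  · exact .of_finite
  have hp : 1 < s / d := by rwa [one_lt_div (by positivity)]
  exact summable_prod_apply (b := fun n : ℤ => (1 + |(n : ℝ)|) ^ (-(s / d)))
    (fun _ => by positivity) (summable_one_add_abs_int_rpow_neg hp)

section CubeGeometry

variable {i : Fin d → ℤ} {x : EuclideanSpace ℝ (Fin d)}

lemma one_add_abs_le_norm_add (hx : ∀ k, |x k - (i k : ℝ)| ≤ 1 / 2) (k : Fin d) :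
    1 + |(i k : ℝ)| ≤ ‖x‖ + 3 / 2 := by
  have h₁ := abs_sub_abs_le_abs_sub (i k : ℝ) (x k)
  have h₂ : |x k| ≤ ‖x‖ := by simpa only [Real.norm_eq_abs] using PiLp.norm_apply_le x k
  rw [abs_sub_comm] at h₁
  linarith [hx k]

lemma half_le_norm_of_ne_zero (hx : ∀ k, |x k - (i k : ℝ)| ≤ 1 / 2) (hi : i ≠ 0) :
    1 / 2 ≤ ‖x‖ := by
  obtain ⟨k, hk⟩ : ∃ k, i k ≠ 0 := Function.ne_iff.1 hi
  have : (1 : ℝ) ≤ |(i k : ℝ)| := by exact_mod_cast Int.one_le_abs hk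
  linarith [one_add_abs_le_norm_add hx k]

lemma rpow_neg_le_latticeWeight (hx : ∀ k, |x k - (i k : ℝ)| ≤ 1 / 2) {s : ℝ} (hs : 0 ≤ s)
    (hi : i ≠ 0) :
    (4 * ‖x‖) ^ (-s) ≤ latticeWeight (s / d) i := by
  obtain ⟨k₀, -⟩ : ∃ k, i k ≠ 0 := Function.ne_iff.1 hi
  have hd : (d : ℝ) ≠ 0 := by exact_mod_cast (Fin.pos k₀).ne'
  have hx₀ := half_le_norm_of_ne_zero hx hi
  calc (4 * ‖x‖) ^ (-s) = ∏ _k : Fin d, (4 * ‖x‖) ^ (-(s / d)) := by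
        rw [Finset.prod_const, Finset.card_univ, Fintype.card_fin, ← Real.rpow_mul_natCast
          (by positivity), neg_mul, div_mul_cancel₀ s hd]
    _ ≤ latticeWeight (s / d) i :=
        Finset.prod_le_prod (fun _ _ => by positivity) fun k _ =>
          Real.rpow_le_rpow_of_nonpos (by positivity)
            (by linarith [one_add_abs_le_norm_add hx k]) (neg_nonpos.2 (by positivity))

end CubeGeometry

noncomputable def cubeSup (f : EuclideanSpace ℝ (Fin d) → ℝ) (ε : ℝ) (i : Fin d → ℤ) : ℝ :=
  sSup ((fun x => f (ε⁻¹ • x)) '' {x : EuclideanSpace ℝ (Fin d) | ∀ k, |x k - (i k : ℝ)| ≤ 1 / 2})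

section cubeSup

variable {f : EuclideanSpace ℝ (Fin d) → ℝ} {ε : ℝ} {i : Fin d → ℤ}

lemma cubeSup_nonneg (hf : 0 ≤ f) : 0 ≤ cubeSup f ε i :=
  Real.sSup_nonneg <| by rintro _ ⟨x, -, rfl⟩; exact hf _

lemma le_cubeSup (hf : BddAbove (range f)) {x : EuclideanSpace ℝ (Fin d)}
    (hx : ∀ k, |x k - (i k : ℝ)| ≤ 1 / 2) : f (ε⁻¹ • x) ≤ cubeSup f ε i :=
  le_csSup (hf.mono <| by rintro _ ⟨y, -, rfl⟩; exact mem_range_self _) ⟨x, hx, rfl⟩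

lemma cubeSup_le {B : ℝ} (hB : 0 ≤ B)
    (h : ∀ x : EuclideanSpace ℝ (Fin d), (∀ k, |x k - (i k : ℝ)| ≤ 1 / 2) → f (ε⁻¹ • x) ≤ B) :
    cubeSup f ε i ≤ B :=
  Real.sSup_le (by rintro _ ⟨x, hx, rfl⟩; exact h x hx) hB

lemma cubeSup_le_sSup_range (hf : 0 ≤ f) (hbdd : BddAbove (range f)) :
    cubeSup f ε i ≤ sSup (range f) :=
  cubeSup_le (Real.sSup_nonneg <| by rintro _ ⟨x, rfl⟩; exact hf x) fun _ _ =>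
    le_csSup hbdd (mem_range_self _)

end cubeSup

section Decay

variable {s A : ℝ} {Khat : EuclideanSpace ℝ (Fin d) → ℝ}

lemma decay_const_nonneg (hpos : 0 ≤ Khat) (hdecay : ∀ x, Khat x ≤ A / (1 + ‖x‖ ^ s)) :
    0 ≤ A := by
  simpa using (le_div_iff₀ (by positivity)).1 ((hpos 0).trans (hdecay 0))

lemma bddAbove_range_of_decay (hpos : 0 ≤ Khat) (hdecay : ∀ x, Khat x ≤ A / (1 + ‖x‖ ^ s)) :
    BddAbove (range Khat) :=
  ⟨A, by
    rintro _ ⟨x, rfl⟩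
    exact (hdecay x).trans <| div_le_self (decay_const_nonneg hpos hdecay)
      (le_add_of_nonneg_right (by positivity))⟩

lemma le_mul_norm_rpow_neg (hpos : 0 ≤ Khat) (hdecay : ∀ x, Khat x ≤ A / (1 + ‖x‖ ^ s))
    {y : EuclideanSpace ℝ (Fin d)} (hy : y ≠ 0) : Khat y ≤ A * ‖y‖ ^ (-s) := by
  rw [Real.rpow_neg (norm_nonneg y), ← div_eq_mul_inv]
  exact (hdecay y).trans <| div_le_div_of_nonneg_left (decay_const_nonneg hpos hdecay)
    (by positivity) (by linarith)

lemma cubeSup_le_mul_latticeWeight (hpos : 0 ≤ Khat)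
    (hdecay : ∀ x, Khat x ≤ A / (1 + ‖x‖ ^ s)) (hs : 0 ≤ s) {ε : ℝ} (hε : 0 < ε)
    {i : Fin d → ℤ} (hi : i ≠ 0) :
    cubeSup Khat ε i ≤ A * (4 * ε) ^ s * latticeWeight (s / d) i := by
  have hA := decay_const_nonneg hpos hdecay
  have hw := latticeWeight_nonneg (s / d) i
  refine cubeSup_le (by positivity) fun x hx => ?_
  have hx₀ : 0 < ‖x‖ := (half_le_norm_of_ne_zero hx hi).trans_lt' (by norm_num)
  have hscale : ‖ε⁻¹ • x‖ = (4 * ε)⁻¹ * (4 * ‖x‖) := by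
    rw [norm_smul, Real.norm_of_nonneg (by positivity)]
    field_simp
  calc Khat (ε⁻¹ • x) ≤ A * ‖ε⁻¹ • x‖ ^ (-s) :=
        le_mul_norm_rpow_neg hpos hdecay (smul_ne_zero (by positivity) (norm_pos_iff.1 hx₀))
    _ = A * (4 * ε) ^ s * (4 * ‖x‖) ^ (-s) := by
        rw [hscale, Real.mul_rpow (by positivity) (by positivity), Real.inv_rpow (by positivity),
          Real.rpow_neg (by positivity), inv_inv, mul_assoc]
    _ ≤ A * (4 * ε) ^ s * latticeWeight (s / d) i := by
        gcongr
        exact rpow_neg_le_latticeWeight hx hs hi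

lemma summable_cubeSup (hpos : 0 ≤ Khat) (hdecay : ∀ x, Khat x ≤ A / (1 + ‖x‖ ^ s))
    (hs : d < s) {ε : ℝ} (hε : 0 < ε) : Summable (cubeSup Khat ε) := by
  refine ((summable_latticeWeight hs).mul_left (A * (4 * ε) ^ s)).of_norm_bounded_eventually ?_
  filter_upwards [eventually_cofinite_ne 0] with i hi
  rw [Real.norm_of_nonneg (cubeSup_nonneg hpos)]
  exact cubeSup_le_mul_latticeWeight hpos hdecay ((Nat.cast_nonneg d).trans hs.le) hε hi

lemma tendsto_tsum_cubeSup_ne_zero (hpos : 0 ≤ Khat) (hdecay : ∀ x, Khat x ≤ A / (1 + ‖x‖ ^ s))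
    (hs : d < s) :
    Tendsto (fun ε => ∑' i : {i : Fin d → ℤ // i ≠ 0}, cubeSup Khat ε i) (𝓝[>] 0) (𝓝 0) := by
  set W := ∑' i : {i : Fin d → ℤ // i ≠ 0}, latticeWeight (s / d) (i : Fin d → ℤ)
  have hs₀ : 0 < s := (Nat.cast_nonneg d).trans_lt hs
  have hbound : Tendsto (fun ε : ℝ => A * (4 * ε) ^ s * W) (𝓝[>] 0) (𝓝 0) := by
    refine tendsto_nhdsWithin_of_tendsto_nhds (Continuous.tendsto' ?_ 0 0 ?_)
    · fun_prop (disch := exact hs₀.le)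
    · simp [Real.zero_rpow hs₀.ne']
  refine tendsto_of_tendsto_of_tendsto_of_le_of_le' tendsto_const_nhds hbound
    (Eventually.of_forall fun ε => tsum_nonneg fun i => cubeSup_nonneg hpos) ?_
  filter_upwards [self_mem_nhdsWithin] with ε hε
  rw [← tsum_mul_left]
  exact ((summable_cubeSup hpos hdecay hs hε).subtype _).tsum_le_tsum
    (fun i => cubeSup_le_mul_latticeWeight hpos hdecay hs₀.le hε i.2)
    (((summable_latticeWeight hs).subtype _).mul_left _)

end Decay

section Fourier

open scoped RealInnerProductSpace

variable {Khat K0 : EuclideanSpace ℝ (Fin d) → ℝ}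

lemma exp_two_pi_I_mul (r : ℝ) : Complex.exp (2 * Real.pi * Complex.I * r) = 𝐞 r := by
  rw [Real.fourierChar_apply]; push_cast; ring_nf

lemma inner_intToEuc_toLp (m : Fin d → ℤ) (u : Fin d → ℝ) :
    ⟪intToEuc d m, WithLp.toLp 2 u⟫ = ∑ k, (m k : ℝ) * u k := by
  simp [intToEuc, PiLp.inner_apply, mul_comm]

lemma ofReal_pow_mul_apply_smul_intToEuc
    (hinv : ∀ y, (K0 y : ℂ) =
      ∫ t, (Khat t : ℂ) * Complex.exp (2 * Real.pi * Complex.I * (inner ℝ y t : ℝ)))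
    {ε : ℝ} (hε : 0 < ε) (m : Fin d → ℤ) :
    ((ε ^ d * K0 (ε • intToEuc d m) : ℝ) : ℂ) =
      ∫ u : Fin d → ℝ, (Khat (ε⁻¹ • WithLp.toLp 2 u) : ℂ) * latticeChar m u := by
  calc ((ε ^ d * K0 (ε • intToEuc d m) : ℝ) : ℂ)
      = ε ^ d • ∫ t, (Khat t : ℂ) * 𝐞 ⟪ε • intToEuc d m, t⟫ := by
        simp [hinv, exp_two_pi_I_mul]
    _ = ∫ x, (Khat (ε⁻¹ • x) : ℂ) * 𝐞 ⟪ε • intToEuc d m, ε⁻¹ • x⟫ := by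
        have := Measure.integral_comp_inv_smul_of_nonneg volume
          (fun t => (Khat t : ℂ) * 𝐞 ⟪ε • intToEuc d m, t⟫) hε.le
        rw [finrank_euclideanSpace_fin] at this
        exact this.symm
    _ = ∫ x, (Khat (ε⁻¹ • x) : ℂ) * 𝐞 ⟪intToEuc d m, x⟫ := by
        simp_rw [real_inner_smul_left, real_inner_smul_right, ← mul_assoc, mul_inv_cancel₀ hε.ne',
          one_mul]
    _ = ∫ u : Fin d → ℝ, (Khat (ε⁻¹ • WithLp.toLp 2 u) : ℂ) * latticeChar m u := by
        rw [← (PiLp.volume_preserving_toLp (Fin d)).integral_comp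
          (MeasurableEquiv.toLp 2 _).measurableEmbedding]
        simp [latticeChar, inner_intToEuc_toLp]

lemma apply_eq_zero_of_not_integrable
    (hinv : ∀ y, (K0 y : ℂ) =
      ∫ t, (Khat t : ℂ) * Complex.exp (2 * Real.pi * Complex.I * (inner ℝ y t : ℝ)))
    (hK : ¬ Integrable Khat) (y : EuclideanSpace ℝ (Fin d)) : K0 y = 0 := by
  have hconv : ¬ Integrable fun t => 𝐞 (-⟪t, -y⟫) • (Khat t : ℂ) := by
    rw [Real.fourierIntegral_convergent_iff]
    exact fun h => hK (by simpa using h.re)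
  rw [← Complex.ofReal_eq_zero, hinv, integral_undef]
  simp_rw [exp_two_pi_I_mul]
  simpa [Circle.smul_def, real_inner_comm, mul_comm] using hconv

end Fourier

noncomputable def toeplitzForm (K : EuclideanSpace ℝ (Fin d) → ℝ) (ε : ℝ)
    (v : (Fin d → ℤ) → ℝ) : ℝ :=
  ∑' p : (Fin d → ℤ) × (Fin d → ℤ), v p.1 * v p.2 * ε ^ d * K (ε • intToEuc d (p.2 - p.1))

section ToeplitzBound

variable {s A : ℝ} {Khat K0 : EuclideanSpace ℝ (Fin d) → ℝ}

theorem toeplitzForm_le_tsum_cubeSup (hpos : 0 ≤ Khat)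
    (hdecay : ∀ x, Khat x ≤ A / (1 + ‖x‖ ^ s)) (hs : d < s)
    (hinv : ∀ y, (K0 y : ℂ) =
      ∫ t, (Khat t : ℂ) * Complex.exp (2 * Real.pi * Complex.I * (inner ℝ y t : ℝ)))
    {ε : ℝ} (hε : 0 < ε) {v : (Fin d → ℤ) → ℝ}
    (hv : ∑' j, v j ^ 2 = 1) : toeplitzForm K0 ε v ≤ ∑' i, cubeSup Khat ε i := by
  have hS₀ : 0 ≤ ∑' i, cubeSup Khat ε i := tsum_nonneg fun i => cubeSup_nonneg hpos
  by_cases hK : Integrable Khat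
  swap
  -- the Fourier integral of a non-integrable function is the junk value `0`
  · simpa [toeplitzForm, apply_eq_zero_of_not_integrable hinv hK] using hS₀
  have hg : Integrable fun u : Fin d → ℝ => Khat (ε⁻¹ • WithLp.toLp 2 u) :=
    ((PiLp.volume_preserving_toLp (Fin d)).integrable_comp_emb
      (MeasurableEquiv.toLp 2 _).measurableEmbedding).2 (hK.comp_smul (inv_ne_zero hε.ne'))
  have hvs : Summable fun j => v j ^ 2 := by
    by_contra h
    simp [tsum_eq_zero_of_not_summable h] at hv
  refine tsum_le_of_sum_product_le hS₀ fun F => ?_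
  have hsection := integral_mul_norm_sq_trigPoly (F := F) (v := v) hg
    (ofReal_pow_mul_apply_smul_intToEuc hinv hε)
  simp only [← mul_assoc] at hsection
  rw [← hsection]
  refine integral_mul_norm_sq_trigPoly_le hg (fun i u hu => le_cubeSup
    (bddAbove_range_of_decay hpos hdecay) fun k => abs_sub_le_of_mem_unitCube hu k)
    (fun i => cubeSup_nonneg hpos) (summable_cubeSup hpos hdecay hs hε) ?_
  exact hv ▸ hvs.sum_le_tsum F fun j _ => sq_nonneg _

theorem limsup_sSup_toeplitzForm_le (hpos : 0 ≤ Khat)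
    (hdecay : ∀ x, Khat x ≤ A / (1 + ‖x‖ ^ s)) (hs : d < s)
    (hinv : ∀ y, (K0 y : ℂ) =
      ∫ t, (Khat t : ℂ) * Complex.exp (2 * Real.pi * Complex.I * (inner ℝ y t : ℝ))) :
    limsup (fun ε => sSup {q | ∃ v : (Fin d → ℤ) → ℝ, ∑' j, v j ^ 2 = 1 ∧
      q = toeplitzForm K0 ε v}) (𝓝[>] 0) ≤ sSup (range Khat) := by
  have hM : 0 ≤ sSup (range Khat) := Real.sSup_nonneg (by rintro _ ⟨x, rfl⟩; exact hpos x)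
  refine limsup_le_of_forall_pos_eventually_le hM fun δ hδ => ?_
  filter_upwards [self_mem_nhdsWithin,
    (tendsto_tsum_cubeSup_ne_zero hpos hdecay hs).eventually_lt_const hδ] with ε hε hsmall
  refine Real.sSup_le ?_ (by positivity)
  rintro _ ⟨v, hv, rfl⟩
  have hsum := summable_cubeSup hpos hdecay hs hε
  calc toeplitzForm K0 ε v ≤ ∑' i, cubeSup Khat ε i :=
        toeplitzForm_le_tsum_cubeSup hpos hdecay hs hinv hε hv
    _ = cubeSup Khat ε 0 + ∑' i : {i : Fin d → ℤ // i ≠ 0}, cubeSup Khat ε i :=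
        hsum.tsum_eq_add_tsum_ne 0
    _ ≤ sSup (range Khat) + δ :=
        add_le_add (cubeSup_le_sSup_range hpos (bddAbove_range_of_decay hpos hdecay)) hsmall.le

end ToeplitzBound

end DiscreteKernel

open DiscreteKernel

theorem discrete_kernel_eigenvalue_bound_general {d : ℕ} (A τ : ℝ) (hτ : 0 < τ)
    (Khat : EuclideanSpace ℝ (Fin d) → ℝ)
    (hKdecay : ∀ x, 0 ≤ Khat x ∧ Khat x ≤ A / (1 + ‖x‖ ^ ((d : ℝ) + τ)))
    (K0 : EuclideanSpace ℝ (Fin d) → ℝ)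
    -- K₀ is the inverse Fourier transform of K̂₀
    (hK0 : ∀ y, (K0 y : ℂ) =
      ∫ t, (Khat t : ℂ) * Complex.exp (2 * Real.pi * Complex.I * (inner ℝ y t : ℝ)))
    -- the Toeplitz-type quadratic form on ℓ²(ℤ^d)
    (Q : ℝ → ((Fin d → ℤ) → ℝ) → ℝ)
    (hQ : ∀ ε v, Q ε v = ∑' p : (Fin d → ℤ) × (Fin d → ℤ),
      v p.1 * v p.2 * ε ^ d * K0 (ε • intToEuc d (p.2 - p.1)))
    -- supremum of K̂₀(·/ε) over the unit cube centered at `i`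
    (S : ℝ → (Fin d → ℤ) → ℝ)
    (hS : ∀ ε i, S ε i = sSup ((fun x => Khat (ε⁻¹ • x)) ''
      {x : EuclideanSpace ℝ (Fin d) | ∀ k, |x k - (i k : ℝ)| ≤ 1 / 2})) :
    (∀ ε : ℝ, 0 < ε → ∀ v : (Fin d → ℤ) → ℝ, (∑' j, (v j) ^ 2) = 1 →
      Q ε v ≤ ∑' i : Fin d → ℤ, S ε i) ∧
    Tendsto (fun ε => ∑' i : {i : Fin d → ℤ // i ≠ 0}, S ε i)
      (nhdsWithin 0 (Set.Ioi 0)) (nhds 0) ∧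
    Filter.limsup
      (fun ε => sSup {q | ∃ v : (Fin d → ℤ) → ℝ, (∑' j, (v j) ^ 2) = 1 ∧ q = Q ε v})
      (nhdsWithin 0 (Set.Ioi 0)) ≤ sSup (Set.range Khat) := by
  obtain rfl : Q = toeplitzForm K0 := funext fun ε => funext (hQ ε)
  obtain rfl : S = cubeSup Khat := funext fun ε => funext (hS ε)
  have hpos : 0 ≤ Khat := fun x => (hKdecay x).1
  have hdecay := fun x => (hKdecay x).2
  have hs : (d : ℝ) < d + τ := lt_add_of_pos_right _ hτ
  exact ⟨fun ε hε v hv => toeplitzForm_le_tsum_cubeSup hpos hdecay hs hK0 hε hv,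
    tendsto_tsum_cubeSup_ne_zero hpos hdecay hs,
    limsup_sSup_toeplitzForm_le hpos hdecay hs hK0⟩

theorem discrete_kernel_eigenvalue_bound {d : ℕ} (A τ : ℝ) (hA : 0 < A) (hτ : 0 < τ)
    (Khat : EuclideanSpace ℝ (Fin d) → ℝ)
    (hKdecay : ∀ x, 0 ≤ Khat x ∧ Khat x ≤ A / (1 + ‖x‖ ^ ((d : ℝ) + τ)))
    (K0 : EuclideanSpace ℝ (Fin d) → ℝ)
    -- K₀ is the inverse Fourier transform of K̂₀
    (hK0 : ∀ y, (K0 y : ℂ) =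
      ∫ t, (Khat t : ℂ) * Complex.exp (2 * Real.pi * Complex.I * (inner ℝ y t : ℝ)))
    -- the Toeplitz-type quadratic form on ℓ²(ℤ^d)
    (Q : ℝ → ((Fin d → ℤ) → ℝ) → ℝ)
    (hQ : ∀ ε v, Q ε v = ∑' p : (Fin d → ℤ) × (Fin d → ℤ),
      v p.1 * v p.2 * ε ^ d * K0 (ε • intToEuc d (p.2 - p.1)))
    -- supremum of K̂₀(·/ε) over the unit cube centered at `i`
    (S : ℝ → (Fin d → ℤ) → ℝ)
    (hS : ∀ ε i, S ε i = sSup ((fun x => Khat (ε⁻¹ • x)) ''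
      {x : EuclideanSpace ℝ (Fin d) | ∀ k, |x k - (i k : ℝ)| ≤ 1 / 2})) :
    (∀ ε : ℝ, 0 < ε → ∀ v : (Fin d → ℤ) → ℝ, (∑' j, (v j) ^ 2) = 1 →
      Q ε v ≤ ∑' i : Fin d → ℤ, S ε i) ∧
    Tendsto (fun ε => ∑' i : {i : Fin d → ℤ // i ≠ 0}, S ε i)
      (nhdsWithin 0 (Set.Ioi 0)) (nhds 0) ∧
    Filter.limsup
      (fun ε => sSup {q | ∃ v : (Fin d → ℤ) → ℝ, (∑' j, (v j) ^ 2) = 1 ∧ q = Q ε v})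
      (nhdsWithin 0 (Set.Ioi 0)) ≤ sSup (Set.range Khat) :=
  discrete_kernel_eigenvalue_bound_general A τ hτ Khat hKdecay K0 hK0 Q hQ S hS
end
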